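/- arXiv:2506.01473 — 2 statements merged into one kernel-verified Lean document; each statement's English description precedes it below -/
import Mathlib

section
/- Let θ>0 and −1<β<0, and let X be a random variable with probability density f(x;θ,β)=(1/θ)(1+βx/θ)^{−1/β−1} on (0,−θ/β). Then for every t with 0<t<−θ/β, E[((β+1)/(θ+βX))·min(X,t)] = 1−(1+βt/θ)^{−1/β}, i.e. the expectation equals the GPD cumulative distribution function F(t;θ,β). -/
/-!
The identity is Stein's: the GPD density satisfies `f' = -((β + 1) / (θ + β x)) f`, so the
integrand is `-min(x, t) f'(x)` and integration by parts gives `F(t) - t f(m⁻) = F(t)`, where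
`m = -θ/β` is the right end of the support. For `β > -1` the density vanishes at `m`, and the
integrand is nonnegative, hence integrable near the singular endpoint. Concretely, on `[0, t]`
the integrand is the derivative of `F(x) - x f(x)` and on `[t, m]` that of `-t f(x)`.
-/

open MeasureTheory Set

theorem integrableOn_Ioc_and_integral_eq_sub_of_hasDerivAt_of_nonneg {g g' : ℝ → ℝ} {a b : ℝ}
    (hab : a ≤ b) (hcont : ContinuousOn g (Icc a b))
    (hderiv : ∀ x ∈ Ioo a b, HasDerivAt g (g' x) x) (hpos : ∀ x ∈ Ioo a b, 0 ≤ g' x) :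
    IntegrableOn g' (Ioc a b) ∧ ∫ x in Ioc a b, g' x = g b - g a := by
  have hint := intervalIntegral.integrableOn_deriv_of_nonneg hcont hderiv hpos
  refine ⟨hint, ?_⟩
  rw [← intervalIntegral.integral_of_le hab]
  exact intervalIntegral.integral_eq_sub_of_hasDerivAt_of_le hab hcont hderiv
    ((intervalIntegrable_iff_integrableOn_Ioc_of_le hab).2 hint)

noncomputable section

def gpdPDF (θ β x : ℝ) : ℝ := 1 / θ * (1 + β * x / θ) ^ (-1 / β - 1)

def gpdCDF (θ β x : ℝ) : ℝ := 1 - (1 + β * x / θ) ^ (-1 / β)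

end

section GPD

variable {θ β : ℝ}

theorem add_mul_pos_of_lt_neg_div (hβ : β < 0) {x : ℝ} (hx : x < -θ / β) : 0 < θ + β * x := by
  rw [lt_div_iff_of_neg hβ] at hx
  linarith

theorem one_add_mul_div_pos_of_lt_neg_div (hθ : 0 < θ) (hβ : β < 0) {x : ℝ} (hx : x < -θ / β) :
    0 < 1 + β * x / θ := by
  rw [one_add_div hθ.ne']
  exact div_pos (add_mul_pos_of_lt_neg_div hβ hx) hθ

theorem hasDerivAt_one_add_mul_div (x : ℝ) : HasDerivAt (fun y ↦ 1 + β * y / θ) (β / θ) x := by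
  simpa using (((hasDerivAt_id x).const_mul β).div_const θ).const_add 1

theorem hasDerivAt_gpdCDF (hβ : β ≠ 0) {x : ℝ} (hx : 0 < 1 + β * x / θ) :
    HasDerivAt (gpdCDF θ β) (gpdPDF θ β x) x := by
  refine (((hasDerivAt_one_add_mul_div x).rpow_const (Or.inl hx.ne')).const_sub 1).congr_deriv ?_
  unfold gpdPDF
  field_simp

theorem hasDerivAt_gpdPDF (hθ : θ ≠ 0) (hβ : β ≠ 0) {x : ℝ} (hx : 0 < 1 + β * x / θ) :
    HasDerivAt (gpdPDF θ β) (-((β + 1) / (θ + β * x) * gpdPDF θ β x)) x := by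
  refine (((hasDerivAt_one_add_mul_div x).rpow_const (Or.inl hx.ne')).const_mul
    (1 / θ)).congr_deriv ?_
  have hθx : θ + β * x = θ * (1 + β * x / θ) := by field_simp
  rw [hθx, Real.rpow_sub_one hx.ne']
  unfold gpdPDF
  field_simp
  ring

theorem hasDerivAt_gpdCDF_sub_mul_gpdPDF (hθ : θ ≠ 0) (hβ : β ≠ 0) {x : ℝ}
    (hx : 0 < 1 + β * x / θ) :
    HasDerivAt (fun y ↦ gpdCDF θ β y - y * gpdPDF θ β y)
      ((β + 1) / (θ + β * x) * x * gpdPDF θ β x) x := by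
  refine ((hasDerivAt_gpdCDF hβ hx).sub
    ((hasDerivAt_id x).mul (hasDerivAt_gpdPDF hθ hβ hx))).congr_deriv ?_
  simp only [id]
  ring

theorem gpdPDF_nonneg (hθ : 0 ≤ θ) {x : ℝ} (hx : 0 ≤ 1 + β * x / θ) : 0 ≤ gpdPDF θ β x :=
  mul_nonneg (by positivity) (Real.rpow_nonneg hx _)

theorem continuous_gpdPDF (hβl : -1 ≤ β) (hβu : β < 0) : Continuous (gpdPDF θ β) := by
  have hp : 0 ≤ -1 / β - 1 := by
    rw [sub_nonneg, le_div_iff_of_neg hβu]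
    linarith
  unfold gpdPDF
  fun_prop (disch := exact fun _ ↦ Or.inr hp)

theorem gpdPDF_neg_div (hθ : θ ≠ 0) (hβ : β ≠ 0) (hβ1 : β ≠ -1) : gpdPDF θ β (-θ / β) = 0 := by
  have hp : -1 / β - 1 ≠ 0 := by
    rw [sub_ne_zero, ne_eq, div_eq_one_iff_eq hβ]
    exact fun h ↦ hβ1 h.symm
  have hbase : 1 + β * (-θ / β) / θ = 0 := by
    field_simp
    ring
  rw [gpdPDF, hbase, Real.zero_rpow hp, mul_zero]

theorem gpdCDF_zero : gpdCDF θ β 0 = 0 := by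
  simp [gpdCDF]

theorem gpd_stein_integrand_nonneg (hθ : 0 < θ) (hβl : -1 < β) (hβu : β < 0) {t : ℝ}
    (ht : 0 ≤ t) {x : ℝ} (hx : x ∈ Ioo 0 (-θ / β)) :
    0 ≤ (β + 1) / (θ + β * x) * min x t * gpdPDF θ β x :=
  mul_nonneg
    (mul_nonneg (div_nonneg (by linarith) (add_mul_pos_of_lt_neg_div hβu hx.2).le)
      (le_min hx.1.le ht))
    (gpdPDF_nonneg hθ.le (one_add_mul_div_pos_of_lt_neg_div hθ hβu hx.2).le)

end GPD

/-- **Stein-type identity for the GPD with negative shape parameter.**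
For `θ > 0`, `-1 < β < 0` and the GPD density `f(x;θ,β) = (1/θ)(1+βx/θ)^(-1/β-1)` on
`(0, -θ/β)`, the expectation `E[((β+1)/(θ+βX))·min(X,t)]` equals the GPD CDF
`1-(1+βt/θ)^(-1/β)` for every `0 < t < -θ/β`. -/
theorem gpd_stein_identity_neg_shape (θ β : ℝ) (hθ : 0 < θ) (hβl : -1 < β) (hβu : β < 0)
    (t : ℝ) (ht : 0 < t) (ht' : t < -θ / β) :
    ∫ x in Ioo (0 : ℝ) (-θ / β),
        ((β + 1) / (θ + β * x)) * min x t * ((1 / θ) * (1 + β * x / θ) ^ (-1 / β - 1)) =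
      1 - (1 + β * t / θ) ^ (-1 / β) := by
  have hu : ∀ x < -θ / β, 0 < 1 + β * x / θ := fun x ↦ one_add_mul_div_pos_of_lt_neg_div hθ hβu
  change ∫ x in Ioo 0 (-θ / β), (β + 1) / (θ + β * x) * min x t * gpdPDF θ β x = gpdCDF θ β t
  obtain ⟨hint₁, hI₁⟩ := integrableOn_Ioc_and_integral_eq_sub_of_hasDerivAt_of_nonneg
    (g := fun x ↦ gpdCDF θ β x - x * gpdPDF θ β x) ht.le
    (fun x hx ↦ (hasDerivAt_gpdCDF_sub_mul_gpdPDF hθ.ne' hβu.ne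
      (hu x (hx.2.trans_lt ht'))).continuousAt.continuousWithinAt)
    (fun x hx ↦ by
      rw [min_eq_left hx.2.le]
      exact hasDerivAt_gpdCDF_sub_mul_gpdPDF hθ.ne' hβu.ne (hu x (hx.2.trans ht')))
    (fun x hx ↦ gpd_stein_integrand_nonneg hθ hβl hβu ht.le ⟨hx.1, hx.2.trans ht'⟩)
  obtain ⟨hint₂, hI₂⟩ := integrableOn_Ioc_and_integral_eq_sub_of_hasDerivAt_of_nonneg
    (g := fun x ↦ -(t * gpdPDF θ β x)) ht'.le
    ((continuous_gpdPDF hβl.le hβu).const_mul t).neg.continuousOn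
    (fun x hx ↦ by
      rw [min_eq_right hx.1.le]
      refine ((hasDerivAt_gpdPDF hθ.ne' hβu.ne (hu x hx.2)).const_mul t).neg.congr_deriv ?_
      ring)
    (fun x hx ↦ gpd_stein_integrand_nonneg hθ hβl hβu ht.le ⟨ht.trans hx.1, hx.2⟩)
  rw [← integral_Ioc_eq_integral_Ioo, ← Ioc_union_Ioc_eq_Ioc ht.le ht'.le,
    setIntegral_union (Ioc_disjoint_Ioc_of_le le_rfl) measurableSet_Ioc hint₁ hint₂, hI₁, hI₂,
    gpdPDF_neg_div hθ.ne' hβu.ne hβl.ne', gpdCDF_zero]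
  ring
end

section
/- Let θ>0 and β>0. A positive-valued random variable X has the generalized Pareto distribution GPD(θ,β) (i.e. its CDF is F(t)=1−(1+βt/θ)^{−1/β} for t>0) if and only if its cumulative distribution function satisfies F(t)=E[((β+1)/(θ+βX))·min(X,t)] for all t>0. -/
/-!
Write `h x = (β + 1) / (θ + β x)` and `T s = E[h X; X > s]`. By Fubini,
`E[h X * min X t] = ∫₀ᵗ T s ds`, so the Stein identity says exactly that `T` is a density of `X`
on `(0, ∞)`. The GPD density `f` satisfies `f' = -h f` and tends to `0` at infinity, hence
`∫ₛ^∞ h f = f s`: for a GPD variable `T = f`, which is the forward direction. Conversely, if `T` is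
a density of `X`, then `T s = T 0 - ∫₀ˢ h T`, a linear Volterra equation whose only solution is
`T = T 0 * θ * f`; comparing total masses gives `T 0 * θ = 1`.
-/

open MeasureTheory ProbabilityTheory Set
open Filter Topology

noncomputable section

def gpdCdf (θ β t : ℝ) : ℝ := 1 - (1 + β * t / θ) ^ (-1 / β)

def gpdPdf (θ β x : ℝ) : ℝ := (1 / θ) * (1 + β * x / θ) ^ (-1 / β - 1)

def gpdSteinKernel (θ β x : ℝ) : ℝ := (β + 1) / (θ + β * x)

end

lemma volume_real_Ioc_inter_Iio {t x : ℝ} (ht : 0 ≤ t) (hx : 0 ≤ x) :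
    volume.real (Ioc 0 t ∩ Iio x) = min x t := by
  have : (Ioc 0 t ∩ Iio x : Set ℝ) =ᵐ[volume] (Ioc 0 (min t x) : Set ℝ) := by
    rw [← Ioc_inter_Iic]
    exact (EventuallyEq.refl _ _).inter Iio_ae_eq_Iic
  rw [measureReal_congr this, Real.volume_real_Ioc_of_le (by positivity), sub_zero, min_comm]

theorem integral_mul_min_eq_integral_setIntegral_Ioi {μ : Measure ℝ} [SFinite μ] {g : ℝ → ℝ}
    (hg : Integrable g μ) (hμ : ∀ᵐ x ∂μ, 0 < x) {t : ℝ} (ht : 0 ≤ t) :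
    ∫ x, g x * min x t ∂μ = ∫ s in Ioc 0 t, ∫ x in Ioi s, g x ∂μ := by
  set K : ℝ → ℝ → ℝ := fun x s => (Ioi s).indicator g x
  have hK : Integrable (Function.uncurry K) (μ.prod (volume.restrict (Ioc 0 t))) := by
    refine (hg.mul_prod (integrable_const (1 : ℝ))).mono ?_ (ae_of_all _ fun p => ?_)
    · exact hg.aestronglyMeasurable.comp_fst.indicator (s := {p : ℝ × ℝ | p.2 < p.1})
        (measurableSet_lt measurable_snd measurable_fst)
    · simp only [Function.uncurry, K, indicator, mem_Ioi, mul_one]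
      split_ifs <;> simp
  have hinner : ∀ᵐ x ∂μ, ∫ s in Ioc 0 t, K x s = g x * min x t := by
    filter_upwards [hμ] with x hx
    have : ∀ s, K x s = (Iio x).indicator (fun _ => g x) s := fun s => by
      simp only [K, indicator, mem_Ioi, mem_Iio]
    simp only [this, setIntegral_indicator measurableSet_Iio, setIntegral_const,
      volume_real_Ioc_inter_Iio ht hx.le, smul_eq_mul, mul_comm]
  calc ∫ x, g x * min x t ∂μ = ∫ x, (∫ s in Ioc 0 t, K x s) ∂μ :=
        integral_congr_ae (hinner.mono fun _ h => h.symm)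
    _ = ∫ s in Ioc 0 t, ∫ x, K x s ∂μ := integral_integral_swap hK
    _ = ∫ s in Ioc 0 t, ∫ x in Ioi s, g x ∂μ := by
        simp only [K, integral_indicator measurableSet_Ioi]

theorem setIntegral_withDensity_ofReal {α : Type*} [MeasurableSpace α] {μ : Measure α}
    {S A : Set α} {f g : α → ℝ} (hA : MeasurableSet A) (hAS : A ⊆ S) (hf : Measurable f)
    (hf0 : ∀ x ∈ S, 0 ≤ f x) :
    ∫ x in A, g x ∂((μ.restrict S).withDensity fun x => ENNReal.ofReal (f x)) =
      ∫ x in A, g x * f x ∂μ := by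
  rw [restrict_withDensity hA, Measure.restrict_restrict hA, inter_eq_left.2 hAS,
    integral_withDensity_eq_integral_toReal_smul hf.ennreal_ofReal
      (ae_of_all _ fun _ => ENNReal.ofReal_lt_top)]
  refine setIntegral_congr_fun hA fun x hx => ?_
  rw [ENNReal.toReal_ofReal (hf0 x (hAS hx)), smul_eq_mul, mul_comm]

theorem eq_withDensity_of_measureReal_Iic {μ : Measure ℝ} [IsFiniteMeasure μ] {f : ℝ → ℝ}
    (hμ : ∀ᵐ x ∂μ, 0 < x) (hf : ∀ x, 0 < x → 0 ≤ f x)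
    (hfi : ∀ t, 0 < t → IntegrableOn f (Ioc 0 t))
    (hcdf : ∀ t, 0 < t → μ.real (Iic t) = ∫ x in Ioc 0 t, f x) :
    μ = (volume.restrict (Ioi 0)).withDensity fun x => ENNReal.ofReal (f x) := by
  set ν := (volume.restrict (Ioi 0)).withDensity fun x => ENNReal.ofReal (f x)
  have hIic : ∀ t, ν (Iic t) = μ (Iic t) := fun t => by
    rw [withDensity_apply _ measurableSet_Iic, Measure.restrict_restrict measurableSet_Iic,
      Iic_inter_Ioi]
    rcases le_or_gt t 0 with ht | ht
    · rw [Ioc_eq_empty ht.not_gt, Measure.restrict_empty, lintegral_zero_measure,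
        measure_mono_null (fun x hx => not_lt.2 (mem_Iic.1 hx |>.trans ht)) (ae_iff.1 hμ)]
    · rw [← ofReal_integral_eq_lintegral_ofReal (hfi t ht)
        ((ae_restrict_iff' measurableSet_Ioc).2 (ae_of_all _ fun x hx => hf x hx.1)),
        ← hcdf t ht, ofReal_measureReal]
  have : IsFiniteMeasure ν := ⟨(le_of_tendsto' (tendsto_measure_Iic_atTop ν) fun t =>
    (hIic t).trans_le (measure_mono (subset_univ _))).trans_lt (measure_lt_top μ univ)⟩
  exact (Measure.ext_of_Iic ν μ hIic).symm

theorem continuousOn_and_hasDerivAt_of_eq_sub_integral {g u : ℝ → ℝ} {a b c : ℝ}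
    (hint : IntegrableOn (fun x => g x * u x) (Icc a b)) (hg : ContinuousOn g (Ioo a b))
    (hu : ∀ x ∈ Icc a b, u x = c - ∫ y in a..x, g y * u y) :
    ContinuousOn u (Icc a b) ∧ ∀ x ∈ Ioo a b, HasDerivAt u (-(g x * u x)) x := by
  rcases lt_or_ge b a with hba | hab
  · simp [Icc_eq_empty_of_lt hba, Ioo_eq_empty_of_le hba.le]
  have hcont : ContinuousOn u (Icc a b) := by
    have := intervalIntegral.continuousOn_primitive_interval (uIcc_of_le hab ▸ hint)
    rw [uIcc_of_le hab] at this
    exact (continuousOn_const.sub this).congr hu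
  refine ⟨hcont, fun x hx => ?_⟩
  have hnhds : Icc a b ∈ 𝓝 x := Icc_mem_nhds hx.1 hx.2
  have hprim := intervalIntegral.integral_hasDerivAt_right
    (hint.mono_set (uIcc_of_le hx.1.le ▸ Icc_subset_Icc_right hx.2.le)).intervalIntegrable
    ⟨_, hnhds, hint.aestronglyMeasurable⟩
    ((hg.continuousAt (Ioo_mem_nhds hx.1 hx.2)).mul (hcont.continuousAt hnhds))
  exact (hprim.const_sub c).congr_of_eventuallyEq (eventually_of_mem hnhds hu)

theorem mul_eq_mul_of_hasDerivAt_neg_mul {g u v : ℝ → ℝ} {a b : ℝ} (hab : a ≤ b)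
    (hu : ContinuousOn u (Icc a b)) (hv : ContinuousOn v (Icc a b))
    (hv0 : ∀ x ∈ Icc a b, v x ≠ 0)
    (hu' : ∀ x ∈ Ioo a b, HasDerivAt u (-(g x * u x)) x)
    (hv' : ∀ x ∈ Ioo a b, HasDerivAt v (-(g x * v x)) x) :
    u b * v a = u a * v b := by
  rcases hab.eq_or_lt with rfl | hlt
  · ring
  obtain ⟨c, -, hc⟩ := exists_hasDerivAt_eq_slope (fun x => u x / v x) (fun _ => 0) hlt
    (hu.div hv hv0) fun x hx => ((hu' x hx).div (hv' x hx)
      (hv0 x (Ioo_subset_Icc_self hx))).congr_deriv (by ring)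
  have ha := hv0 a (left_mem_Icc.2 hab)
  have hb := hv0 b (right_mem_Icc.2 hab)
  rw [eq_comm, div_eq_zero_iff, sub_eq_zero, div_eq_div_iff hb ha] at hc
  exact hc.resolve_right (sub_ne_zero.2 hlt.ne')

section GPD

variable {θ β : ℝ}

lemma one_add_mul_div_pos (hθ : 0 < θ) (hβ : 0 ≤ β) {x : ℝ} (hx : 0 ≤ x) :
    0 < 1 + β * x / θ := by
  positivity

lemma hasDerivAt_one_add_mul_div_rpow (p : ℝ) {x : ℝ} (hx : 0 < 1 + β * x / θ) :
    HasDerivAt (fun y => (1 + β * y / θ) ^ p) (p * (β / θ) * (1 + β * x / θ) ^ (p - 1)) x := by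
  have h : HasDerivAt (fun y => 1 + β * y / θ) (β / θ) x := by
    simpa using ((hasDerivAt_id x).const_mul β).div_const θ |>.const_add 1
  convert h.rpow_const (p := p) (Or.inl hx.ne') using 1
  ring

lemma hasDerivAt_gpdCdf (hβ : β ≠ 0) {x : ℝ} (hx : 0 < 1 + β * x / θ) :
    HasDerivAt (gpdCdf θ β) (gpdPdf θ β x) x := by
  unfold gpdCdf gpdPdf
  refine ((hasDerivAt_one_add_mul_div_rpow (-1 / β) hx).const_sub 1).congr_deriv ?_
  field_simp

lemma hasDerivAt_gpdPdf (hθ : θ ≠ 0) (hβ : β ≠ 0) {x : ℝ} (hx : 0 < 1 + β * x / θ) :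
    HasDerivAt (gpdPdf θ β) (-(gpdSteinKernel θ β x * gpdPdf θ β x)) x := by
  unfold gpdSteinKernel gpdPdf
  refine ((hasDerivAt_one_add_mul_div_rpow (-1 / β - 1) hx).const_mul (1 / θ)).congr_deriv ?_
  have hθβ : θ + β * x = θ * (1 + β * x / θ) := by field_simp
  rw [hθβ, show -1 / β - 1 - 1 = (-1 / β - 1) + -1 by ring,
    Real.rpow_add hx, Real.rpow_neg_one]
  field_simp
  ring

lemma gpdPdf_pos (hθ : 0 < θ) (hβ : 0 ≤ β) {x : ℝ} (hx : 0 ≤ x) : 0 < gpdPdf θ β x := by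
  have := one_add_mul_div_pos hθ hβ hx
  unfold gpdPdf
  positivity

lemma gpdPdf_zero : gpdPdf θ β 0 = 1 / θ := by
  simp [gpdPdf]

lemma continuousOn_gpdPdf (hθ : 0 < θ) (hβ : 0 ≤ β) : ContinuousOn (gpdPdf θ β) (Ici 0) :=
  fun _ hx => ((hasDerivAt_one_add_mul_div_rpow _ (one_add_mul_div_pos hθ hβ hx)).continuousAt
    |>.const_mul (1 / θ)).continuousWithinAt

lemma gpdSteinKernel_pos (hθ : 0 < θ) (hβ : 0 ≤ β) {x : ℝ} (hx : 0 ≤ x) :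
    0 < gpdSteinKernel θ β x := by
  unfold gpdSteinKernel
  positivity

lemma gpdSteinKernel_le (hθ : 0 < θ) (hβ : 0 ≤ β) {x : ℝ} (hx : 0 ≤ x) :
    gpdSteinKernel θ β x ≤ (β + 1) / θ :=
  div_le_div_of_nonneg_left (by linarith) hθ (by nlinarith)

lemma continuousOn_gpdSteinKernel (hθ : 0 < θ) (hβ : 0 ≤ β) :
    ContinuousOn (gpdSteinKernel θ β) (Ici 0) := fun x (hx : 0 ≤ x) =>
  (continuousAt_const.div (by fun_prop) (by positivity)).continuousWithinAt

lemma measurable_gpdSteinKernel : Measurable (gpdSteinKernel θ β) := by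
  unfold gpdSteinKernel
  fun_prop

lemma measurable_gpdPdf : Measurable (gpdPdf θ β) := by
  unfold gpdPdf
  fun_prop

lemma tendsto_one_add_mul_div_rpow_atTop (hθ : 0 < θ) (hβ : 0 < β) {p : ℝ} (hp : 0 < p) :
    Tendsto (fun y => (1 + β * y / θ) ^ (-p)) atTop (𝓝 0) :=
  (tendsto_rpow_neg_atTop hp).comp <| tendsto_atTop_add_const_left _ 1 <|
    (tendsto_id.const_mul_atTop hβ).atTop_div_const hθ

lemma tendsto_gpdCdf_atTop (hθ : 0 < θ) (hβ : 0 < β) : Tendsto (gpdCdf θ β) atTop (𝓝 1) := by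
  have := (tendsto_one_add_mul_div_rpow_atTop hθ hβ (inv_pos.2 hβ)).const_sub 1
  rw [sub_zero] at this
  convert this using 2 with y
  rw [gpdCdf, inv_eq_one_div, neg_div]

lemma tendsto_gpdPdf_atTop (hθ : 0 < θ) (hβ : 0 < β) : Tendsto (gpdPdf θ β) atTop (𝓝 0) := by
  have := (tendsto_one_add_mul_div_rpow_atTop hθ hβ (p := 1 / β + 1) (by positivity)).const_mul
    (1 / θ)
  rw [mul_zero] at this
  convert this using 2 with y
  rw [gpdPdf]; ring_nf

lemma integral_gpdPdf (hθ : 0 < θ) (hβ : 0 < β) {t : ℝ} (ht : 0 ≤ t) :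
    ∫ x in Ioc 0 t, gpdPdf θ β x = gpdCdf θ β t := by
  have hpos : ∀ x ∈ uIcc 0 t, 0 < 1 + β * x / θ := fun x hx =>
    one_add_mul_div_pos hθ hβ.le (uIcc_of_le ht ▸ hx).1
  rw [← intervalIntegral.integral_of_le ht, intervalIntegral.integral_eq_sub_of_hasDerivAt
    (fun x hx => hasDerivAt_gpdCdf hβ.ne' (hpos x hx))
    (ContinuousOn.intervalIntegrable fun x hx =>
      (hasDerivAt_gpdPdf hθ.ne' hβ.ne' (hpos x hx)).continuousAt.continuousWithinAt)]
  simp [gpdCdf]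

theorem integral_Ioi_gpdSteinKernel_mul_gpdPdf (hθ : 0 < θ) (hβ : 0 < β) {s : ℝ} (hs : 0 ≤ s) :
    ∫ x in Ioi s, gpdSteinKernel θ β x * gpdPdf θ β x = gpdPdf θ β s := by
  have hderiv : ∀ x ∈ Ici s, HasDerivAt (fun y => -gpdPdf θ β y)
      (gpdSteinKernel θ β x * gpdPdf θ β x) x := fun x hx => by
    simpa using (hasDerivAt_gpdPdf hθ.ne' hβ.ne'
      (one_add_mul_div_pos hθ hβ.le (hs.trans hx))).fun_neg
  have hlim : Tendsto (fun y => -gpdPdf θ β y) atTop (𝓝 0) := by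
    simpa using (tendsto_gpdPdf_atTop hθ hβ).neg
  have hnonneg : ∀ x ∈ Ioi s, 0 ≤ gpdSteinKernel θ β x * gpdPdf θ β x := fun x hx =>
    mul_nonneg (gpdSteinKernel_pos hθ hβ.le (hs.trans hx.out.le)).le
      (gpdPdf_pos hθ hβ.le (hs.trans hx.out.le)).le
  rw [integral_Ioi_of_hasDerivAt_of_tendsto' hderiv
    (integrableOn_Ioi_deriv_of_nonneg' hderiv hnonneg hlim) hlim]
  ring

theorem eq_gpdPdf_of_eq_sub_integral (hθ : 0 < θ) (hβ : 0 < β) {u : ℝ → ℝ}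
    (hint : ∀ s, 0 ≤ s → IntegrableOn u (Icc 0 s))
    (hu : ∀ s, 0 ≤ s → u s = u 0 - ∫ x in 0..s, gpdSteinKernel θ β x * u x) {s : ℝ}
    (hs : 0 ≤ s) : u s = u 0 * θ * gpdPdf θ β s := by
  have hh : ContinuousOn (gpdSteinKernel θ β) (Icc 0 s) :=
    (continuousOn_gpdSteinKernel hθ hβ.le).mono Icc_subset_Ici_self
  obtain ⟨hu_cont, hu'⟩ := continuousOn_and_hasDerivAt_of_eq_sub_integral
    ((hint s hs).continuousOn_mul hh isCompact_Icc) (hh.mono Ioo_subset_Icc_self)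
    fun x hx => hu x hx.1
  have key := mul_eq_mul_of_hasDerivAt_neg_mul hs hu_cont
    ((continuousOn_gpdPdf hθ hβ.le).mono Icc_subset_Ici_self)
    (fun x hx => (gpdPdf_pos hθ hβ.le hx.1).ne') hu'
    fun x hx => hasDerivAt_gpdPdf hθ.ne' hβ.ne' (one_add_mul_div_pos hθ hβ.le hx.1.le)
  rw [gpdPdf_zero] at key
  field_simp at key ⊢
  linarith

end GPD

section SteinCharacterization

variable {θ β : ℝ} {μ : Measure ℝ}

theorem antitone_setIntegral_Ioi {g : ℝ → ℝ} (hg : Integrable g μ) (hg0 : 0 ≤ᵐ[μ] g) :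
    Antitone fun s => ∫ x in Ioi s, g x ∂μ := fun _ _ hst =>
  setIntegral_mono_set hg.integrableOn (ae_restrict_of_ae hg0)
    (Ioi_subset_Ioi hst).eventuallyLE

lemma gpdSteinKernel_ae_nonneg (hθ : 0 < θ) (hβ : 0 ≤ β) (hμ : ∀ᵐ x ∂μ, 0 < x) :
    0 ≤ᵐ[μ] gpdSteinKernel θ β := by
  filter_upwards [hμ] with x hx using (gpdSteinKernel_pos hθ hβ hx.le).le

lemma integrable_gpdSteinKernel [IsFiniteMeasure μ] (hθ : 0 < θ) (hβ : 0 ≤ β)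
    (hμ : ∀ᵐ x ∂μ, 0 < x) : Integrable (gpdSteinKernel θ β) μ := by
  refine .of_bound measurable_gpdSteinKernel.aestronglyMeasurable ((β + 1) / θ) ?_
  filter_upwards [hμ] with x hx
  rw [Real.norm_of_nonneg (gpdSteinKernel_pos hθ hβ hx.le).le]
  exact gpdSteinKernel_le hθ hβ hx.le

theorem integral_gpdSteinKernel_mul_min_of_measureReal_Iic [IsFiniteMeasure μ] (hθ : 0 < θ)
    (hβ : 0 < β) (hμ : ∀ᵐ x ∂μ, 0 < x)
    (hcdf : ∀ t, 0 < t → μ.real (Iic t) = gpdCdf θ β t) {t : ℝ} (ht : 0 < t) :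
    ∫ x, gpdSteinKernel θ β x * min x t ∂μ = gpdCdf θ β t := by
  have hμ_eq : μ = (volume.restrict (Ioi 0)).withDensity fun x => ENNReal.ofReal (gpdPdf θ β x) :=
    eq_withDensity_of_measureReal_Iic hμ (fun x hx => (gpdPdf_pos hθ hβ.le hx.le).le)
      (fun t _ => ((continuousOn_gpdPdf hθ hβ.le).mono Icc_subset_Ici_self).integrableOn_Icc
        |>.mono_set Ioc_subset_Icc_self)
      fun t ht => (hcdf t ht).trans (integral_gpdPdf hθ hβ ht.le).symm
  have htail : ∀ s ∈ Ioc 0 t, ∫ x in Ioi s, gpdSteinKernel θ β x ∂μ = gpdPdf θ β s :=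
    fun s hs => by
      rw [hμ_eq, setIntegral_withDensity_ofReal measurableSet_Ioi (Ioi_subset_Ioi hs.1.le)
        measurable_gpdPdf fun x hx => (gpdPdf_pos hθ hβ.le (le_of_lt hx)).le,
        integral_Ioi_gpdSteinKernel_mul_gpdPdf hθ hβ hs.1.le]
  rw [integral_mul_min_eq_integral_setIntegral_Ioi (integrable_gpdSteinKernel hθ hβ.le hμ) hμ
    ht.le, setIntegral_congr_fun measurableSet_Ioc htail, integral_gpdPdf hθ hβ ht.le]

theorem setIntegral_Ioi_gpdSteinKernel_eq_of_stein [IsFiniteMeasure μ] (hθ : 0 < θ)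
    (hβ : 0 < β) (hμ : ∀ᵐ x ∂μ, 0 < x)
    (hstein : ∀ t, 0 < t → μ.real (Iic t) = ∫ x, gpdSteinKernel θ β x * min x t ∂μ) {s : ℝ}
    (hs : 0 ≤ s) :
    ∫ x in Ioi s, gpdSteinKernel θ β x ∂μ =
      (∫ x in Ioi 0, gpdSteinKernel θ β x ∂μ) * θ * gpdPdf θ β s := by
  set T : ℝ → ℝ := fun s => ∫ x in Ioi s, gpdSteinKernel θ β x ∂μ
  have hh := integrable_gpdSteinKernel hθ hβ.le hμ
  have hT_anti : Antitone T := antitone_setIntegral_Ioi hh (gpdSteinKernel_ae_nonneg hθ hβ.le hμ)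
  have hT_nonneg : ∀ s, 0 ≤ T s := fun s =>
    integral_nonneg_of_ae (ae_restrict_of_ae (gpdSteinKernel_ae_nonneg hθ hβ.le hμ))
  have hμ_eq : μ = (volume.restrict (Ioi 0)).withDensity fun x => ENNReal.ofReal (T x) :=
    eq_withDensity_of_measureReal_Iic hμ (fun s _ => hT_nonneg s)
      (fun t _ => ((hT_anti.antitoneOn _).integrableOn_isCompact isCompact_Icc).mono_set
        Ioc_subset_Icc_self)
      fun t ht => (hstein t ht).trans (integral_mul_min_eq_integral_setIntegral_Ioi hh hμ ht.le)
  -- `T` is a density of `μ`, which turns the definition of `T` into a Volterra equation.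
  have hT_eq : ∀ s, 0 ≤ s → T s = T 0 - ∫ x in 0..s, gpdSteinKernel θ β x * T x := by
    intro s hs
    have hsplit : T 0 = (∫ x in Ioc 0 s, gpdSteinKernel θ β x ∂μ) + T s := by
      simp only [T]
      rw [← Ioc_union_Ioi_eq_Ioi hs, setIntegral_union (Ioc_disjoint_Ioi le_rfl)
        measurableSet_Ioi hh.integrableOn hh.integrableOn]
    have hdens : ∫ x in Ioc 0 s, gpdSteinKernel θ β x ∂μ =
        ∫ x in 0..s, gpdSteinKernel θ β x * T x := by
      nth_rw 1 [hμ_eq]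
      rw [intervalIntegral.integral_of_le hs]
      exact setIntegral_withDensity_ofReal measurableSet_Ioc Ioc_subset_Ioi_self
        hT_anti.measurable fun x _ => hT_nonneg x
    linarith
  exact eq_gpdPdf_of_eq_sub_integral hθ hβ
    (fun s _ => (hT_anti.antitoneOn _).integrableOn_isCompact isCompact_Icc) hT_eq hs

theorem measureReal_Iic_eq_gpdCdf_of_stein [IsProbabilityMeasure μ] (hθ : 0 < θ) (hβ : 0 < β)
    (hμ : ∀ᵐ x ∂μ, 0 < x)
    (hstein : ∀ t, 0 < t → μ.real (Iic t) = ∫ x, gpdSteinKernel θ β x * min x t ∂μ) {t : ℝ}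
    (ht : 0 < t) : μ.real (Iic t) = gpdCdf θ β t := by
  set c := (∫ x in Ioi 0, gpdSteinKernel θ β x ∂μ) * θ
  have hcdf : ∀ t, 0 < t → μ.real (Iic t) = c * gpdCdf θ β t := fun t ht => by
    rw [hstein t ht, integral_mul_min_eq_integral_setIntegral_Ioi
      (integrable_gpdSteinKernel hθ hβ.le hμ) hμ ht.le,
      setIntegral_congr_fun measurableSet_Ioc fun s hs =>
        setIntegral_Ioi_gpdSteinKernel_eq_of_stein hθ hβ hμ hstein hs.1.le,
      integral_const_mul, integral_gpdPdf hθ hβ ht.le]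
  have hc : c = 1 := by
    refine tendsto_nhds_unique ?_ (tendsto_cdf_atTop (μ := μ))
    simpa using ((tendsto_gpdCdf_atTop hθ hβ).const_mul c).congr' <|
      (eventually_gt_atTop 0).mono fun t ht => ((cdf_eq_real μ t).trans (hcdf t ht)).symm
  rw [hcdf t ht, hc, one_mul]

end SteinCharacterization

/-- **Characterization of the GPD with positive shape parameter via Stein's identity.**
A positive-valued random variable `X` has the GPD(θ,β) distribution (CDF
`F(t) = 1-(1+βt/θ)^(-1/β)` for `t > 0`) if and only if its CDF satisfies
`F(t) = E[((β+1)/(θ+βX))·min(X,t)]` for all `t > 0`. -/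
theorem gpd_characterization_stein_pos_shape {Ω : Type*} [MeasureSpace Ω]
    [IsProbabilityMeasure (ℙ : Measure Ω)]
    (θ β : ℝ) (hθ : 0 < θ) (hβ : 0 < β)
    (X : Ω → ℝ) (hX : Measurable X) (hpos : ∀ᵐ ω ∂ℙ, 0 < X ω) :
    (∀ t : ℝ, 0 < t → (ℙ {ω | X ω ≤ t}).toReal = 1 - (1 + β * t / θ) ^ (-1 / β)) ↔
      (∀ t : ℝ, 0 < t → (ℙ {ω | X ω ≤ t}).toReal =
        ∫ ω, ((β + 1) / (θ + β * X ω)) * min (X ω) t ∂ℙ) := by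
  set μ := (ℙ : Measure Ω).map X
  have : IsProbabilityMeasure μ := Measure.isProbabilityMeasure_map hX.aemeasurable
  have hμ : ∀ᵐ x ∂μ, 0 < x := (ae_map_iff hX.aemeasurable measurableSet_Ioi).2 hpos
  have hcdf (t : ℝ) : (ℙ {ω | X ω ≤ t}).toReal = μ.real (Iic t) :=
    (map_measureReal_apply hX measurableSet_Iic).symm
  have hstein (t : ℝ) : ∫ ω, ((β + 1) / (θ + β * X ω)) * min (X ω) t ∂ℙ =
      ∫ x, gpdSteinKernel θ β x * min x t ∂μ :=
    (integral_map hX.aemeasurable (measurable_gpdSteinKernel.mul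
      (measurable_id.min measurable_const)).aestronglyMeasurable).symm
  simp only [hcdf, hstein]
  exact ⟨fun h t ht => (h t ht).trans
      (integral_gpdSteinKernel_mul_min_of_measureReal_Iic hθ hβ hμ h ht).symm,
    fun h t ht => measureReal_Iic_eq_gpdCdf_of_stein hθ hβ hμ h ht⟩
end
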